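/- arXiv:1207.5881 — 5 statements merged into one kernel-verified Lean document; each statement's English description precedes it below -/
import Mathlib

section
/- Suppose Ω is a Cantor group that admits a minimal ℤ^d action by translations {T^n}_{n∈ℤ^d}. Then for every continuous f : Ω → ℝ and every ω ∈ Ω, the element V_ω of ℓ∞(ℤ^d) defined by V_ω(n) = f(T^n ω) is limit-periodic. -/
/-!
A continuous function on a compact totally disconnected abelian group is uniformly continuous, and
open subgroups form a basis at `0`; so for every `ε` it varies by less than `ε` on each coset of
some open subgroup `H`, which has finite index. Replacing `f` by its values at fixed coset
representatives changes `V_ω` by at most `ε`, and the new sequence factors through the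
homomorphism `ℤ^d → Ω ⧸ H`, `n ↦ [∑ n_j α_j]`, into a finite group, hence is periodic.
-/

open Filter Topology

/-- Translation action of `ℤ^d` on `ℓ^∞(ℤ^d)`: `(S_m V)(n) = V(n - m)`. -/
noncomputable def Sh {d : ℕ} (m : Fin d → ℤ) (V : lp (fun _ : Fin d → ℤ => ℝ) ⊤) :
    lp (fun _ : Fin d → ℤ => ℝ) ⊤ :=
  ⟨fun n => V (n - m), by
    show Memℓp (fun n : Fin d → ℤ => V (n - m)) ⊤
    have h : Memℓp (fun n : Fin d → ℤ => V n) ⊤ := lp.memℓp V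
    rw [memℓp_infty_iff] at h ⊢
    have hsurj : Function.Surjective (fun n : Fin d → ℤ => n - m) :=
      fun y => ⟨y + m, by simp⟩
    have heq : (Set.range fun n : Fin d → ℤ => ‖V (n - m)‖) =
        Set.range fun n : Fin d → ℤ => ‖V n‖ := by
      have h2 : (fun n : Fin d → ℤ => ‖V (n - m)‖) =
          (fun n => ‖V n‖) ∘ (fun n : Fin d → ℤ => n - m) := rfl
      rw [h2, Set.range_comp, hsurj.range_eq, Set.image_univ]
    rwa [heq]⟩

/-- `V ∈ ℓ^∞(ℤ^d)` is periodic if its orbit under translations is finite. -/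
def PeriodicSeq {d : ℕ} (V : lp (fun _ : Fin d → ℤ => ℝ) ⊤) : Prop :=
  (Set.range fun m : Fin d → ℤ => Sh m V).Finite

/-- `V ∈ ℓ^∞(ℤ^d)` is limit-periodic if it lies in the `ℓ^∞`-closure of the periodic
elements. -/
def LimitPeriodicSeq {d : ℕ} (V : lp (fun _ : Fin d → ℤ => ℝ) ⊤) : Prop :=
  V ∈ closure {W : lp (fun _ : Fin d → ℤ => ℝ) ⊤ | PeriodicSeq W}

/-- The hull of `V ∈ ℓ^∞(ℤ^d)`: the closure of its translation orbit. -/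
noncomputable def hullSet {d : ℕ} (V : lp (fun _ : Fin d → ℤ => ℝ) ⊤) :
    Set (lp (fun _ : Fin d → ℤ => ℝ) ⊤) :=
  closure (Set.range fun m : Fin d → ℤ => Sh m V)

theorem exists_openAddSubgroup_forall_sub_mem_dist_lt {G β : Type*} [AddCommGroup G]
    [TopologicalSpace G] [IsTopologicalAddGroup G] [CompactSpace G] [TotallyDisconnectedSpace G]
    [PseudoMetricSpace β] {f : G → β} (hf : Continuous f) {ε : ℝ} (hε : 0 < ε) :
    ∃ H : OpenAddSubgroup G, ∀ x y, y - x ∈ H → dist (f x) (f y) < ε := by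
  let _ : UniformSpace G := IsTopologicalAddGroup.rightUniformSpace G
  have : IsUniformAddGroup G := isUniformAddGroup_of_addCommGroup
  have hmem := CompactSpace.uniformContinuous_of_continuous hf (Metric.dist_mem_uniformity hε)
  rw [uniformity_eq_comap_nhds_zero G] at hmem
  obtain ⟨U, hU, hUε⟩ := Filter.mem_comap.mp hmem
  obtain ⟨H, hHU⟩ := ProfiniteGrp.exist_openNormalAddSubgroup_sub_open_nhds_of_zero
    isOpen_interior (mem_interior_iff_mem_nhds.mpr hU)
  exact ⟨H.toOpenAddSubgroup, fun x y hxy => @hUε (x, y) (interior_subset (hHU hxy) :)⟩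

@[simp]
theorem Sh_apply {d : ℕ} (m : Fin d → ℤ) (V : lp (fun _ : Fin d → ℤ => ℝ) ⊤) (n : Fin d → ℤ) :
    Sh m V n = V (n - m) :=
  rfl

theorem exists_periodicSeq_eq_comp {d : ℕ} {Q : Type*} [AddGroup Q] [Finite Q]
    (φ : (Fin d → ℤ) →+ Q) (g : Q → ℝ) :
    ∃ W : lp (fun _ : Fin d → ℤ => ℝ) ⊤, PeriodicSeq W ∧ ∀ n, W n = g (φ n) := by
  have hbdd : BddAbove (Set.range fun n => ‖g (φ n)‖) :=
    (Set.finite_range fun q => ‖g q‖).bddAbove.mono (Set.range_comp_subset_range φ fun q => ‖g q‖)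
  let W : lp (fun _ : Fin d → ℤ => ℝ) ⊤ := ⟨fun n => g (φ n), memℓp_infty hbdd⟩
  have hSh : ∀ m m', φ m = φ m' → Sh m W = Sh m' W := fun m m' h => by
    ext n
    simp only [Sh_apply, W, map_sub, h]
  refine ⟨W, (Set.finite_range fun q => Sh (Function.invFun φ q) W).subset ?_, fun _ => rfl⟩
  rintro _ ⟨m, rfl⟩
  exact ⟨φ m, hSh _ _ (Function.invFun_eq ⟨m, rfl⟩)⟩

theorem limitPeriodicSeq_of_forall_exists_dist_le {d : ℕ} (V : lp (fun _ : Fin d → ℤ => ℝ) ⊤)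
    (h : ∀ ε > 0, ∃ W, PeriodicSeq W ∧ ∀ n, dist (V n) (W n) ≤ ε) : LimitPeriodicSeq V := by
  refine Metric.mem_closure_iff.mpr fun ε hε => ?_
  obtain ⟨W, hW, hVW⟩ := h (ε / 2) (half_pos hε)
  refine ⟨W, hW, lt_of_le_of_lt ?_ (half_lt_self hε)⟩
  rw [dist_eq_norm]
  exact lp.norm_le_of_forall_le (half_pos hε).le fun n => by simpa [dist_eq_norm] using hVW n

theorem limitPeriodic_of_sampling_general (d : ℕ) (Ω : Type) [TopologicalSpace Ω] [AddCommGroup Ω]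
    [IsTopologicalAddGroup Ω] [CompactSpace Ω] [TotallyDisconnectedSpace Ω]
    (α : Fin d → Ω)
    (f : C(Ω, ℝ)) (ω : Ω) (V : lp (fun _ : Fin d → ℤ => ℝ) ⊤)
    (hV : ∀ n : Fin d → ℤ, V n = f (ω + ∑ j, n j • α j)) :
    LimitPeriodicSeq V := by
  refine limitPeriodicSeq_of_forall_exists_dist_le V fun ε hε => ?_
  obtain ⟨H, hH⟩ := exists_openAddSubgroup_forall_sub_mem_dist_lt f.continuous hε
  let φ : (Fin d → ℤ) →+ Ω ⧸ H.toAddSubgroup :=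
    (QuotientAddGroup.mk' _).comp (Fintype.linearCombination ℤ α).toAddMonoidHom
  obtain ⟨W, hW, hWφ⟩ := exists_periodicSeq_eq_comp φ fun q => f (ω + q.out)
  refine ⟨W, hW, fun n => ?_⟩
  obtain ⟨h, hout⟩ := QuotientAddGroup.mk_out_eq_add H.toAddSubgroup (∑ j, n j • α j)
  have hφ : φ n = (∑ j, n j • α j : Ω) := by simp [φ, Fintype.linearCombination_apply]
  rw [hV, hWφ]
  refine (hH _ _ ?_).le
  rw [hφ, hout, add_sub_add_left_eq_sub, add_sub_cancel_left]
  exact h.2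

/-- If `Ω` is a Cantor group admitting a minimal `ℤ^d` action by
translations `T^n ω = ω + ∑ j, n j • α j`, then for every continuous `f : Ω → ℝ` and every
`ω ∈ Ω`, the element `V_ω ∈ ℓ^∞(ℤ^d)` given by `V_ω(n) = f(T^n ω)` is limit-periodic. -/
theorem limitPeriodic_of_sampling (d : ℕ) (Ω : Type) [TopologicalSpace Ω] [AddCommGroup Ω]
    [IsTopologicalAddGroup Ω] [CompactSpace Ω] [TotallyDisconnectedSpace Ω]
    [TopologicalSpace.MetrizableSpace Ω] [Infinite Ω]
    (α : Fin d → Ω)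
    (hmin : ∀ ω : Ω, Dense (Set.range fun n : Fin d → ℤ => ω + ∑ j, n j • α j))
    (f : C(Ω, ℝ)) (ω : Ω) (V : lp (fun _ : Fin d → ℤ => ℝ) ⊤)
    (hV : ∀ n : Fin d → ℤ, V n = f (ω + ∑ j, n j • α j)) :
    LimitPeriodicSeq V :=
  limitPeriodic_of_sampling_general d Ω α f ω V hV
end

section
/- Suppose Ω is a Cantor group that admits a minimal ℤ^d action by translations {T^n}_{n∈ℤ^d}, f : Ω → ℝ is continuous, and for ω ∈ Ω let V_ω ∈ ℓ∞(ℤ^d) be defined by V_ω(n) = f(T^n ω). Then for each ω ∈ Ω, the hull of V_ω equals {V_{ω̃} : ω̃ ∈ Ω}, i.e., the closure in ℓ∞(ℤ^d) of {S_m V_ω : m ∈ ℤ^d} is exactly the set of all sequences n ↦ f(T^n ω̃) with ω̃ ∈ Ω. -/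
open Filter Topology

/-!
Since `Ω` is compact, `ω ↦ f(ω + ·)` is continuous into `C(Ω, ℝ)` with the sup norm, and sampling
a function along `n ↦ ∑ n_j α_j` is `1`-Lipschitz into `ℓ^∞(ℤ^d)`; hence `ω ↦ V_ω` is continuous,
and, `Ω` being compact, a closed map. As `S_m V_ω = V_{T^{-m} ω}`, the translation orbit of `V_ω`
is the image of the `T`-orbit of `ω`, so its closure is the image of the closure of that orbit,
which is all of `Ω` by minimality.
-/

noncomputable def sampling {ι X : Type*} [TopologicalSpace X] [CompactSpace X] (p : ι → X)
    (g : C(X, ℝ)) : lp (fun _ : ι => ℝ) ⊤ :=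
  ⟨g ∘ p, memℓp_infty ⟨‖g‖, by
    rintro _ ⟨i, rfl⟩
    exact g.norm_coe_le_norm (p i)⟩⟩

theorem lipschitzWith_sampling {ι X : Type*} [TopologicalSpace X] [CompactSpace X]
    (p : ι → X) : LipschitzWith 1 (sampling p) := by
  refine LipschitzWith.of_dist_le_mul fun g h => ?_
  rw [NNReal.coe_one, one_mul, dist_eq_norm]
  refine lp.norm_le_of_forall_le dist_nonneg fun i => ?_
  rw [lp.coeFn_sub, Pi.sub_apply, ← dist_eq_norm]
  exact ContinuousMap.dist_apply_le_dist (p i)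

theorem continuous_of_apply_eq_apply_add {ι Ω : Type*} [TopologicalSpace Ω] [Add Ω]
    [ContinuousAdd Ω] [CompactSpace Ω] (p : ι → Ω) (f : C(Ω, ℝ))
    (V : Ω → lp (fun _ : ι => ℝ) ⊤) (hV : ∀ ω i, V ω i = f (ω + p i)) : Continuous V := by
  let translates : C(Ω, C(Ω, ℝ)) := (f.comp ⟨fun z : Ω × Ω => z.1 + z.2, continuous_add⟩).curry
  have hV_eq : V = sampling p ∘ translates := by
    funext ω
    ext i
    exact hV ω i
  rw [hV_eq]
  exact (lipschitzWith_sampling p).continuous.comp translates.continuous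

theorem sh_eq_apply_add_sum_neg {d : ℕ} {Ω : Type*} [AddCommGroup Ω] (α : Fin d → Ω)
    (f : Ω → ℝ) (V : Ω → lp (fun _ : Fin d → ℤ => ℝ) ⊤)
    (hV : ∀ (ω : Ω) (n : Fin d → ℤ), V ω n = f (ω + ∑ j, n j • α j))
    (m : Fin d → ℤ) (ω : Ω) : Sh m (V ω) = V (ω + ∑ j, (-m) j • α j) := by
  ext n
  change V ω (n - m) = V _ n
  rw [hV, hV]
  simp only [Pi.sub_apply, Pi.neg_apply, sub_smul, neg_smul, Finset.sum_sub_distrib,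
    Finset.sum_neg_distrib]
  abel_nf

theorem hull_of_sampling_eq_range_general (d : ℕ) (Ω : Type) [TopologicalSpace Ω] [AddCommGroup Ω]
    [IsTopologicalAddGroup Ω] [CompactSpace Ω]
    (α : Fin d → Ω)
    (hmin : ∀ ω : Ω, Dense (Set.range fun n : Fin d → ℤ => ω + ∑ j, n j • α j))
    (f : C(Ω, ℝ)) (V : Ω → lp (fun _ : Fin d → ℤ => ℝ) ⊤)
    (hV : ∀ (ω : Ω) (n : Fin d → ℤ), V ω n = f (ω + ∑ j, n j • α j)) :
    ∀ ω : Ω, hullSet (V ω) = Set.range V := by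
  intro ω
  have hV_cont : Continuous V := continuous_of_apply_eq_apply_add _ f V hV
  have horbit : (Set.range fun m : Fin d → ℤ => Sh m (V ω)) =
      V '' Set.range fun n : Fin d → ℤ => ω + ∑ j, n j • α j := by
    simp_rw [sh_eq_apply_add_sum_neg α f V hV, ← Set.range_comp]
    exact (Equiv.neg _).surjective.range_comp fun n : Fin d → ℤ => V (ω + ∑ j, n j • α j)
  rw [hullSet, horbit, hV_cont.isClosedMap.closure_image_eq_of_continuous hV_cont,
    (hmin ω).closure_eq, Set.image_univ]

/-- If `Ω` is a Cantor group admitting a minimal `ℤ^d` action by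
translations, `f : Ω → ℝ` is continuous and `V_ω(n) = f(T^n ω)`, then for each `ω ∈ Ω` the
hull of `V_ω` (the `ℓ^∞`-closure of `{S_m V_ω : m ∈ ℤ^d}`) equals `{V_ω̃ : ω̃ ∈ Ω}`. -/
theorem hull_of_sampling_eq_range (d : ℕ) (Ω : Type) [TopologicalSpace Ω] [AddCommGroup Ω]
    [IsTopologicalAddGroup Ω] [CompactSpace Ω] [TotallyDisconnectedSpace Ω]
    [TopologicalSpace.MetrizableSpace Ω] [Infinite Ω]
    (α : Fin d → Ω)
    (hmin : ∀ ω : Ω, Dense (Set.range fun n : Fin d → ℤ => ω + ∑ j, n j • α j))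
    (f : C(Ω, ℝ)) (V : Ω → lp (fun _ : Fin d → ℤ => ℝ) ⊤)
    (hV : ∀ (ω : Ω) (n : Fin d → ℤ), V ω n = f (ω + ∑ j, n j • α j)) :
    ∀ ω : Ω, hullSet (V ω) = Set.range V :=
  hull_of_sampling_eq_range_general d Ω α hmin f V hV
end

section
/- Suppose V ∈ ℓ∞(ℤ^d) is limit-periodic and ε > 0. Then there exist p_1, …, p_d ∈ ℤ₊ such that the set hull_p(V), defined as the closure in ℓ∞(ℤ^d) of {S_m V : m ∈ (p_1ℤ) × ⋯ × (p_dℤ)}, satisfies: (i) hull_p(V) is contained in the ε-ball around V in ℓ∞(ℤ^d); (ii) hull_p(V) is compact; (iii) hull(V) is the union of the finitely many translates S_n(hull_p(V)) over n ∈ {0,…,p_1−1} × ⋯ × {0,…,p_d−1}; consequently hull_p(V) is also open in hull(V). -/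
open Filter Topology

namespace HullAux

variable {d : ℕ}

noncomputable abbrev E (d : ℕ) := lp (fun _ : Fin d → ℤ => ℝ) ⊤

lemma Sh_add (m k : Fin d → ℤ) (V : E d) : Sh m (Sh k V) = Sh (m + k) V := by
  apply lp.ext; funext n
  show V (n - m - k) = V (n - (m + k))
  rw [sub_sub]

lemma Sh_zero (V : E d) : Sh 0 V = V := by
  apply lp.ext; funext n; show V (n - 0) = V n; rw [sub_zero]

lemma norm_Sh (m : Fin d → ℤ) (V : E d) : ‖Sh m V‖ = ‖V‖ := by
  rw [lp.norm_eq_ciSup, lp.norm_eq_ciSup]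
  apply congrArg sSup
  have hsurj : Function.Surjective (fun n : Fin d → ℤ => n - m) :=
    fun y => ⟨y + m, by simp⟩
  have h2 : (fun n : Fin d → ℤ => ‖(Sh m V) n‖) =
      (fun n => ‖V n‖) ∘ (fun n : Fin d → ℤ => n - m) := rfl
  rw [h2, Set.range_comp, hsurj.range_eq, Set.image_univ]

lemma Sh_sub (m : Fin d → ℤ) (V W : E d) : Sh m V - Sh m W = Sh m (V - W) := by
  apply lp.ext; funext n
  show (Sh m V) n - (Sh m W) n = (V - W) (n - m)
  rfl

lemma dist_Sh (m : Fin d → ℤ) (V W : E d) : dist (Sh m V) (Sh m W) = dist V W := by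
  rw [dist_eq_norm, dist_eq_norm, Sh_sub, norm_Sh]

/-- `Sh m` as an isometry equivalence. -/
noncomputable def shE (m : Fin d → ℤ) : E d ≃ᵢ E d where
  toFun := Sh m
  invFun := Sh (-m)
  left_inv := fun V => by rw [Sh_add, neg_add_cancel, Sh_zero]
  right_inv := fun V => by rw [Sh_add, add_neg_cancel, Sh_zero]
  isometry_toFun := Isometry.of_dist_eq fun V W => dist_Sh m V W

lemma Sh_image_closure (m : Fin d → ℤ) (s : Set (E d)) :
    Sh m '' closure s = closure (Sh m '' s) :=
  (shE m).toHomeomorph.image_closure s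

lemma Sh_injective (m : Fin d → ℤ) : Function.Injective (Sh m : E d → E d) :=
  (shE m).injective

/-- The stabilizer of `W` under the translation action. -/
def stab (W : E d) : AddSubgroup (Fin d → ℤ) where
  carrier := {m | Sh m W = W}
  add_mem' := by
    intro a b ha hb
    show Sh (a + b) W = W
    rw [← Sh_add, hb, ha]
  zero_mem' := Sh_zero W
  neg_mem' := by
    intro a ha
    show Sh (-a) W = W
    have h : Sh a W = W := ha
    have := congrArg (Sh (-a)) h
    rw [Sh_add, neg_add_cancel, Sh_zero] at this
    exact this.symm

lemma mem_stab {W : E d} {m : Fin d → ℤ} : m ∈ stab W ↔ Sh m W = W := Iff.rfl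

lemma finite_quotient_stab {W : E d} (hW : PeriodicSeq W) :
    Finite ((Fin d → ℤ) ⧸ stab W) := by
  have hresp : ∀ a b : Fin d → ℤ, (QuotientAddGroup.leftRel (stab W)).r a b →
      Sh a W = Sh b W := by
    intro a b hab
    have h : -a + b ∈ stab W := (QuotientAddGroup.leftRel_apply).mp hab
    have h2 : Sh (-a + b) W = W := h
    have := congrArg (Sh a) h2
    rw [Sh_add, ← add_assoc, add_neg_cancel, zero_add] at this
    exact this.symm
  let f : ((Fin d → ℤ) ⧸ stab W) → E d :=
    Quotient.lift (fun m => Sh m W) hresp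
  have hinj : Function.Injective f := by
    intro x y
    induction x using Quotient.inductionOn with | _ a =>
    induction y using Quotient.inductionOn with | _ b =>
    intro hxy
    have hab : Sh a W = Sh b W := hxy
    refine Quotient.sound (QuotientAddGroup.leftRel_apply.mpr ?_)
    show Sh (-a + b) W = W
    have := congrArg (Sh (-a)) hab.symm
    rwa [Sh_add, Sh_add, neg_add_cancel, Sh_zero] at this
  have hrange : Set.range f ⊆ Set.range (fun m : Fin d → ℤ => Sh m W) := by
    rintro x ⟨q, rfl⟩
    induction q using Quotient.inductionOn with | _ a =>
    exact ⟨a, rfl⟩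
  have hfin : (Set.range f).Finite := hW.subset hrange
  haveI := hfin.to_subtype
  exact Finite.of_injective (fun q => (⟨f q, Set.mem_range_self q⟩ : Set.range f))
    (fun a b hab => hinj (congrArg Subtype.val hab))

end HullAux

open HullAux

/-- If `V ∈ ℓ^∞(ℤ^d)` is limit-periodic and `ε > 0`, there are
`p_1, …, p_d ∈ ℤ₊` such that `hull_p(V)`, the closure of `{S_m V : m ∈ p₁ℤ × ⋯ × p_dℤ}`,
is contained in the `ε`-ball around `V`, is compact, and `hull(V)` is the union of the
translates `S_n(hull_p(V))` over `n ∈ {0,…,p₁−1} × ⋯ × {0,…,p_d−1}`; consequently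
`hull_p(V)` is open in `hull(V)`. -/
theorem hull_finite_index_subgroup (d : ℕ) (V : lp (fun _ : Fin d → ℤ => ℝ) ⊤)
    (hV : LimitPeriodicSeq V) (ε : ℝ) (hε : 0 < ε) :
    ∃ p : Fin d → ℤ, (∀ j, 0 < p j) ∧
      ∀ hullp : Set (lp (fun _ : Fin d → ℤ => ℝ) ⊤),
        hullp = closure (Set.range fun m : Fin d → ℤ => Sh (fun j => m j * p j) V) →
        hullp ⊆ Metric.ball V ε ∧
        IsCompact hullp ∧
        (hullSet V = ⋃ n ∈ {n : Fin d → ℤ | ∀ j, 0 ≤ n j ∧ n j < p j}, Sh n '' hullp) ∧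
        IsOpen (Subtype.val ⁻¹' hullp : Set (hullSet V)) := by
  -- Choose a periodic `W` within `ε/3` of `V`.
  obtain ⟨W, hWper, hWdist⟩ :
      ∃ W : E d, PeriodicSeq W ∧ dist V W < ε / 3 := by
    have := Metric.mem_closure_iff.mp hV (ε / 3) (by linarith)
    obtain ⟨W, hW, hd⟩ := this
    exact ⟨W, hW, hd⟩
  haveI : Finite ((Fin d → ℤ) ⧸ stab W) := finite_quotient_stab hWper
  set N : ℕ := (stab W).index with hN
  have hN0 : N ≠ 0 := AddSubgroup.index_ne_zero_of_finite
  refine ⟨fun _ => (N : ℤ), fun j => by show (0:ℤ) < (N:ℤ); exact_mod_cast Nat.pos_of_ne_zero hN0, ?_⟩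
  set p : Fin d → ℤ := fun _ => (N : ℤ) with hp
  -- `c m` multiplies componentwise by `p`.
  set c : (Fin d → ℤ) → (Fin d → ℤ) := fun m => fun j => m j * p j with hc
  have hcW : ∀ m : Fin d → ℤ, Sh (c m) W = W := by
    intro m
    have h1 : N • m ∈ stab W := AddSubgroup.nsmul_index_mem (stab W) m
    have h2 : c m = N • m := by
      funext j
      show m j * (N : ℤ) = N • m j
      rw [nsmul_eq_mul, mul_comm]
    rw [h2]
    exact h1
  have hcadd : ∀ m l : Fin d → ℤ, c m + c l = c (m + l) := by
    intro m l; funext j; show m j * p j + l j * p j = (m j + l j) * p j; ring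
  intro hullp hullpdef
  set R : Set (E d) := Set.range (fun m : Fin d → ℤ => Sh (c m) V) with hR
  have hullp_eq : hullp = closure R := hullpdef
  -- orbit points at distance < 2ε/3 from V
  have hRdist : ∀ x ∈ R, dist x V ≤ 2 * ε / 3 := by
    rintro x ⟨m, rfl⟩
    have h1 : dist (Sh (c m) V) (Sh (c m) W) = dist V W := dist_Sh _ _ _
    have h2 : Sh (c m) W = W := hcW m
    calc dist (Sh (c m) V) V ≤ dist (Sh (c m) V) (Sh (c m) W) + dist (Sh (c m) W) V :=
          dist_triangle _ _ _
      _ = dist V W + dist W V := by rw [h1, h2]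
      _ = dist V W + dist V W := by rw [dist_comm]
      _ ≤ 2 * ε / 3 := by linarith
  -- (i) ball containment
  have hball : hullp ⊆ Metric.ball V ε := by
    rw [hullp_eq]
    have h1 : R ⊆ Metric.closedBall V (2 * ε / 3) := fun x hx =>
      Metric.mem_closedBall.mpr (hRdist x hx)
    have h2 : closure R ⊆ Metric.closedBall V (2 * ε / 3) :=
      closure_minimal h1 Metric.isClosed_closedBall
    intro x hx
    have := h2 hx
    rw [Metric.mem_closedBall] at this
    rw [Metric.mem_ball]
    linarith
  -- hull(V) is compact (total boundedness from limit-periodicity).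
  haveI : Fact ((1 : ENNReal) ≤ ⊤) := ⟨le_top⟩
  have htb : TotallyBounded (Set.range fun m : Fin d → ℤ => Sh m V) := by
    rw [Metric.totallyBounded_iff]
    intro η hη
    obtain ⟨W', hW'per, hW'dist⟩ :
        ∃ W' : E d, PeriodicSeq W' ∧ dist V W' < η := by
      obtain ⟨W', hW', hd⟩ := Metric.mem_closure_iff.mp hV η hη
      exact ⟨W', hW', hd⟩
    refine ⟨Set.range (fun m : Fin d → ℤ => Sh m W'), hW'per, ?_⟩
    rintro x ⟨m, rfl⟩
    refine Set.mem_biUnion (Set.mem_range_self m) ?_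
    rw [Metric.mem_ball, dist_Sh]
    exact hW'dist
  have hhullcompact : IsCompact (hullSet V) :=
    TotallyBounded.isCompact_of_isClosed htb.closure isClosed_closure
  -- hullp ⊆ hull V
  have hsub : hullp ⊆ hullSet V := by
    rw [hullp_eq]
    exact closure_mono (by rintro x ⟨m, rfl⟩; exact ⟨c m, rfl⟩)
  have hcompact : IsCompact hullp :=
    hhullcompact.of_isClosed_subset (hullp_eq ▸ isClosed_closure) hsub
  -- the box of representatives
  set box : Set (Fin d → ℤ) := {n : Fin d → ℤ | ∀ j, 0 ≤ n j ∧ n j < p j} with hbox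
  have hboxfin : box.Finite := by
    have : box ⊆ Set.pi Set.univ (fun j => Set.Ico (0 : ℤ) (p j)) := by
      intro n hn j _
      exact ⟨(hn j).1, (hn j).2⟩
    exact (Set.Finite.pi (fun j => Set.finite_Ico _ _)).subset this
  -- union decomposition
  have hpos : ∀ j, (0 : ℤ) < p j := fun j => by
    show (0:ℤ) < (N:ℤ); exact_mod_cast Nat.pos_of_ne_zero hN0
  have himgclosed : ∀ n : Fin d → ℤ, IsClosed (Sh n '' hullp) := by
    intro n
    rw [hullp_eq, Sh_image_closure]
    exact isClosed_closure
  have himgsub : ∀ n : Fin d → ℤ, Sh n '' hullp ⊆ hullSet V := by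
    intro n
    rw [hullp_eq, Sh_image_closure]
    apply closure_mono
    rintro x ⟨y, ⟨m, rfl⟩, rfl⟩
    exact ⟨n + c m, (Sh_add n (c m) V).symm⟩
  have hunion : hullSet V = ⋃ n ∈ box, Sh n '' hullp := by
    apply Set.Subset.antisymm
    · -- hull ⊆ union
      have hclosed : IsClosed (⋃ n ∈ box, Sh n '' hullp) :=
        hboxfin.isClosed_biUnion (fun n _ => himgclosed n)
      apply closure_minimal _ hclosed
      rintro x ⟨m, rfl⟩
      set n : Fin d → ℤ := fun j => m j % p j with hn
      set q : Fin d → ℤ := fun j => m j / p j with hq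
      have hnbox : n ∈ box := by
        intro j
        exact ⟨Int.emod_nonneg (m j) (ne_of_gt (hpos j)), Int.emod_lt_of_pos (m j) (hpos j)⟩
      have hdecomp : n + c q = m := by
        funext j
        show m j % p j + (m j / p j) * p j = m j
        rw [mul_comm]
        exact Int.emod_add_mul_ediv (m j) (p j)
      refine Set.mem_biUnion hnbox ⟨Sh (c q) V, ?_, ?_⟩
      · rw [hullp_eq]; exact subset_closure ⟨q, rfl⟩
      · rw [Sh_add, hdecomp]
    · -- union ⊆ hull
      intro x hx
      obtain ⟨n, _, hxn⟩ := Set.mem_iUnion₂.mp hx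
      exact himgsub n hxn
  -- Key dichotomy lemma: if a translate of hullp meets hullp, it is contained in it.
  have hkey : ∀ n : Fin d → ℤ, ((Sh n '' hullp) ∩ hullp).Nonempty → Sh n '' hullp ⊆ hullp := by
    intro n ⟨Wp, hWimg, hWin⟩
    obtain ⟨W', hW'in, rfl⟩ := hWimg
    rintro x ⟨U, hUin, rfl⟩
    rw [hullp_eq] at hWin hW'in hUin ⊢
    rw [Metric.mem_closure_iff]
    intro η hη
    obtain ⟨_, ⟨m, rfl⟩, hm⟩ := Metric.mem_closure_iff.mp hWin (η / 4) (by linarith)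
    obtain ⟨_, ⟨l, rfl⟩, hl⟩ := Metric.mem_closure_iff.mp hW'in (η / 4) (by linarith)
    obtain ⟨_, ⟨s, rfl⟩, hs⟩ := Metric.mem_closure_iff.mp hUin (η / 4) (by linarith)
    -- dist (Sh n W') (Sh (n + c l) V) < η/4
    have h1 : dist (Sh n W') (Sh (n + c l) V) < η / 4 := by
      rw [← Sh_add n (c l) V, dist_Sh]; exact hl
    -- so dist (Sh (c m) V) (Sh (n + c l) V) < η/2
    have h2 : dist (Sh (c m) V) (Sh (n + c l) V) < η / 2 := by
      calc dist (Sh (c m) V) (Sh (n + c l) V)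
          ≤ dist (Sh (c m) V) (Sh n W') + dist (Sh n W') (Sh (n + c l) V) :=
            dist_triangle _ _ _
        _ < η / 4 + η / 4 := by
            apply add_lt_add _ h1
            rw [dist_comm]; exact hm
        _ = η / 2 := by ring
    -- shift by c (s - l)
    have h3 : dist (Sh (c (s - l) + c m) V) (Sh (c (s - l) + (n + c l)) V) < η / 2 := by
      rw [← Sh_add, ← Sh_add, dist_Sh]; exact h2
    have harith : c (s - l) + (n + c l) = n + c s := by
      funext j
      show (s j - l j) * p j + (n j + l j * p j) = n j + s j * p j
      ring
    have h4 : dist (Sh (c (s - l + m)) V) (Sh (n + c s) V) < η / 2 := by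
      rw [← hcadd (s - l) m, ← harith]
      exact h3
    have h5 : dist (Sh n U) (Sh (n + c s) V) < η / 4 := by
      rw [← Sh_add n (c s) V, dist_Sh]; exact hs
    refine ⟨Sh (c (s - l + m)) V, show Sh (c (s - l + m)) V ∈ R from ⟨s - l + m, rfl⟩, ?_⟩
    calc dist (Sh n U) (Sh (c (s - l + m)) V)
        ≤ dist (Sh n U) (Sh (n + c s) V) + dist (Sh (n + c s) V) (Sh (c (s - l + m)) V) :=
          dist_triangle _ _ _
      _ < η / 4 + η / 2 := add_lt_add h5 (by rw [dist_comm]; exact h4)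
      _ < η := by linarith
  -- dichotomy: each translate equals hullp or is disjoint from it
  have hdich : ∀ n : Fin d → ℤ, Sh n '' hullp = hullp ∨ (Sh n '' hullp) ∩ hullp = ∅ := by
    intro n
    by_cases hne : ((Sh n '' hullp) ∩ hullp).Nonempty
    · left
      apply Set.Subset.antisymm (hkey n hne)
      -- hullp ⊆ Sh n '' hullp
      obtain ⟨Wp, hWimg, hWin⟩ := hne
      obtain ⟨W', hW'in, rfl⟩ := hWimg
      have hne' : ((Sh (-n) '' hullp) ∩ hullp).Nonempty := by
        refine ⟨W', ⟨Sh n W', hWin, ?_⟩, hW'in⟩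
        rw [Sh_add, neg_add_cancel, Sh_zero]
      have h := hkey (-n) hne'
      intro x hx
      have hxin : Sh (-n) x ∈ hullp := h ⟨x, hx, rfl⟩
      exact ⟨Sh (-n) x, hxin, by rw [Sh_add, add_neg_cancel, Sh_zero]⟩
    · right
      exact Set.not_nonempty_iff_eq_empty.mp hne
  -- openness
  have hopen : IsOpen (Subtype.val ⁻¹' hullp : Set (hullSet V)) := by
    set C : Set (E d) := ⋃ n ∈ {n ∈ box | (Sh n '' hullp) ∩ hullp = ∅}, Sh n '' hullp with hC
    have hCclosed : IsClosed C :=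
      (hboxfin.subset (Set.sep_subset _ _)).isClosed_biUnion (fun n _ => himgclosed n)
    have heq : (Subtype.val ⁻¹' hullp : Set (hullSet V)) = Subtype.val ⁻¹' Cᶜ := by
      ext ⟨x, hxhull⟩
      simp only [Set.mem_preimage, Set.mem_compl_iff]
      constructor
      · intro hxp hxC
        obtain ⟨n, hn, hxn⟩ := Set.mem_iUnion₂.mp hxC
        have : x ∈ (Sh n '' hullp) ∩ hullp := ⟨hxn, hxp⟩
        rw [hn.2] at this
        exact this
      · intro hxC
        rw [hunion] at hxhull
        obtain ⟨n, hnbox, hxn⟩ := Set.mem_iUnion₂.mp hxhull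
        rcases hdich n with hdn | hdn
        · rwa [hdn] at hxn
        · have hnmem : n ∈ {n ∈ box | (Sh n '' hullp) ∩ hullp = ∅} := ⟨hnbox, hdn⟩
          exact absurd (Set.mem_biUnion hnmem hxn) hxC
    rw [heq]
    exact (hCclosed.isOpen_compl).preimage continuous_subtype_val
  exact ⟨hball, hcompact, hunion, hopen⟩
end

section
/- Suppose Ω is a Cantor group that admits a minimal ℤ^d action by translations {T^n}_{n∈ℤ^d}. Then the set of periodic elements is dense in C(Ω, ℝ) with the sup norm: for every continuous f̃ : Ω → ℝ and every ε > 0, there exist a continuous f : Ω → ℝ and p = (p_1,…,p_d) ∈ (ℤ₊)^d such that ‖f − f̃‖_∞ < ε and f(T^{p_j e_j} ω) = f(ω) for every ω ∈ Ω and every j ∈ {1,…,d} (where e_j is the j-th standard basis vector of ℤ^d); in particular f(T^p ω) = f(ω) for all ω ∈ Ω. -/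
open Topology

/-!
On a compact group, translates `f̃(· + g)` converge uniformly to `f̃` as `g → 0`, and a
compact totally disconnected group has arbitrarily small open subgroups; so `f̃` varies by
less than `ε` along every coset of some open subgroup `H`. Sampling `f̃` at one point of each
coset gives a continuous function `f` that is `ε`-close to `f̃` and `H`-invariant. Since `H`
has finite index, some positive multiple `p_j • α_j` of each generator lies in `H`.
-/

variable {G X : Type*} [AddGroup G] [TopologicalSpace G]

lemma exists_mem_nhds_zero_forall_dist_add_lt [ContinuousAdd G] [CompactSpace G]
    [PseudoMetricSpace X] (f : C(G, X)) {ε : ℝ} (hε : 0 < ε) :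
    ∃ V ∈ 𝓝 (0 : G), ∀ g ∈ V, ∀ x, dist (f (x + g)) (f x) < ε := by
  let F : C(G, C(G, X)) := (f.comp ⟨fun p : G × G => p.2 + p.1, by fun_prop⟩).curry
  have hF0 : F 0 = f := by ext x; simp [F]
  refine ⟨F ⁻¹' Metric.ball f ε, ?_,
    fun g hg x => (ContinuousMap.dist_apply_le_dist x).trans_lt hg⟩
  exact F.continuous.continuousAt.preimage_mem_nhds (hF0 ▸ Metric.ball_mem_nhds _ hε)

lemma exists_openAddSubgroup_forall_dist_add_lt [IsTopologicalAddGroup G] [CompactSpace G]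
    [TotallyDisconnectedSpace G] [PseudoMetricSpace X] (f : C(G, X)) {ε : ℝ} (hε : 0 < ε) :
    ∃ H : OpenAddSubgroup G, ∀ h ∈ H, ∀ x, dist (f (x + h)) (f x) < ε := by
  obtain ⟨V, hV, hVf⟩ := exists_mem_nhds_zero_forall_dist_add_lt f hε
  obtain ⟨H, hHV⟩ := ProfiniteGrp.exist_openNormalAddSubgroup_sub_open_nhds_of_zero
    isOpen_interior (mem_interior_iff_mem_nhds.2 hV)
  exact ⟨H.toOpenAddSubgroup, fun h hh => hVf h (interior_subset (hHV hh))⟩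

lemma OpenAddSubgroup.exists_nsmul_mem [IsTopologicalAddGroup G] [CompactSpace G]
    (H : OpenAddSubgroup G) (a : G) : ∃ n : ℕ, 0 < n ∧ n • a ∈ H := by
  obtain ⟨n, hn, -, hmem⟩ :=
    AddSubgroup.exists_nsmul_mem_of_index_ne_zero
      (H := H.toAddSubgroup) AddSubgroup.index_ne_zero_of_finite a
  exact ⟨n, hn, hmem⟩

namespace ContinuousMap

variable [TopologicalSpace X] [IsTopologicalAddGroup G] (H : OpenAddSubgroup G) (f : C(G, X))

noncomputable def cosetSample : C(G, X) where
  toFun x := f (x : G ⧸ H.toAddSubgroup).out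
  continuous_toFun :=
    (continuous_of_discreteTopology (f := fun q : G ⧸ H.toAddSubgroup => f q.out)).comp
      continuous_quotient_mk'

lemma cosetSample_add_of_mem {a : G} (ha : a ∈ H) (x : G) :
    cosetSample H f (x + a) = cosetSample H f x := by
  have : ((x + a : G) : G ⧸ H.toAddSubgroup) = x :=
    (QuotientAddGroup.eq.2 (by simpa using H.neg_mem ha)).symm
  simp only [cosetSample, coe_mk, this]

lemma exists_mem_cosetSample_eq (x : G) : ∃ h ∈ H, cosetSample H f x = f (x + h) := by
  obtain ⟨⟨h, hh⟩, hout⟩ := QuotientAddGroup.mk_out_eq_add H.toAddSubgroup x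
  exact ⟨h, hh, by simp only [cosetSample, coe_mk, hout]⟩

end ContinuousMap

lemma ContinuousMap.dist_cosetSample_lt [IsTopologicalAddGroup G] [CompactSpace G]
    [PseudoMetricSpace X] (H : OpenAddSubgroup G) (f : C(G, X)) {ε : ℝ}
    (hf : ∀ h ∈ H, ∀ x, dist (f (x + h)) (f x) < ε) :
    dist (cosetSample H f) f < ε := by
  refine (dist_lt_iff_of_nonempty).2 fun x => ?_
  obtain ⟨h, hh, hx⟩ := exists_mem_cosetSample_eq H f x
  exact hx ▸ hf h hh x

open ContinuousMap in
theorem periodic_dense_in_continuous_functions_general (d : ℕ) (Ω : Type) [TopologicalSpace Ω]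
    [AddCommGroup Ω] [IsTopologicalAddGroup Ω] [CompactSpace Ω] [TotallyDisconnectedSpace Ω]
    (α : Fin d → Ω)
    (ftilde : C(Ω, ℝ)) (ε : ℝ) (hε : 0 < ε) :
    ∃ (f : C(Ω, ℝ)) (p : Fin d → ℤ),
      (∀ j, 0 < p j) ∧
      ‖f - ftilde‖ < ε ∧
      (∀ (ω : Ω) (j : Fin d), f (ω + p j • α j) = f ω) ∧
      (∀ ω : Ω, f (ω + ∑ j, p j • α j) = f ω) := by
  obtain ⟨H, hH⟩ := exists_openAddSubgroup_forall_dist_add_lt ftilde hε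
  choose p hp_pos hp_mem using fun j => H.exists_nsmul_mem (α j)
  have hp_mem' (j : Fin d) : (p j : ℤ) • α j ∈ H := by rw [natCast_zsmul]; exact hp_mem j
  refine ⟨cosetSample H ftilde, fun j => p j, fun j => Int.natCast_pos.2 (hp_pos j), ?_,
    fun ω j => cosetSample_add_of_mem H ftilde (hp_mem' j) ω,
    fun ω => cosetSample_add_of_mem H ftilde (AddSubgroup.sum_mem _ fun j _ => hp_mem' j) ω⟩
  rw [← dist_eq_norm]
  exact dist_cosetSample_lt H ftilde hH

/-- If `Ω` is a Cantor group admitting a minimal `ℤ^d` action by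
translations, then the periodic elements are dense in `C(Ω, ℝ)`: for every continuous
`f̃ : Ω → ℝ` and `ε > 0` there are a continuous `f` and `p ∈ (ℤ₊)^d` with `‖f − f̃‖ < ε`
and `f(T^{p_j e_j} ω) = f(ω)` for all `ω, j`; in particular `f(T^p ω) = f(ω)`. -/
theorem periodic_dense_in_continuous_functions (d : ℕ) (Ω : Type) [TopologicalSpace Ω]
    [AddCommGroup Ω] [IsTopologicalAddGroup Ω] [CompactSpace Ω] [TotallyDisconnectedSpace Ω]
    [TopologicalSpace.MetrizableSpace Ω] [Infinite Ω]
    (α : Fin d → Ω)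
    (hmin : ∀ ω : Ω, Dense (Set.range fun n : Fin d → ℤ => ω + ∑ j, n j • α j))
    (ftilde : C(Ω, ℝ)) (ε : ℝ) (hε : 0 < ε) :
    ∃ (f : C(Ω, ℝ)) (p : Fin d → ℤ),
      (∀ j, 0 < p j) ∧
      ‖f - ftilde‖ < ε ∧
      (∀ (ω : Ω) (j : Fin d), f (ω + p j • α j) = f ω) ∧
      (∀ ω : Ω, f (ω + ∑ j, p j • α j) = f ω) :=
  periodic_dense_in_continuous_functions_general d Ω α ftilde ε hε
end

section
/- Suppose Ω is a Cantor group with identity ω_e and compatible metric dist that admits a minimal ℤ^d action by translations {T^n}_{n∈ℤ^d}. Define f : Ω → ℝ by f(ω) = dist(ω_e, ω) and φ : Ω → ℓ∞(ℤ^d) by φ(ω) = (f(T^n ω))_{n∈ℤ^d}. Then φ is injective and continuous; consequently φ is a homeomorphism from Ω onto hull(φ(ω_e)), so hull(φ(ω_e)) is isomorphic as a topological group to Ω. -/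
/-!
Minimality makes the orbit `t(ℤ^d)` of `0`, `t n = ∑ nⱼ αⱼ`, dense in `Ω`. If `φ ω₁ = φ ω₂`, the
continuous functions `x ↦ dist(0, ωᵢ + x)` agree on this dense set, hence everywhere, and
`x = -ω₁` gives `dist(0, ω₂ - ω₁) = 0`. On the compact group `Ω` the translations are uniformly
equicontinuous, and this is exactly continuity of `φ` for the sup norm. So `φ` is a closed
embedding; since `S_m φ(0) = φ(t(-m))`, its image is the closure of the image of the dense orbit,
i.e. `hull(φ(0))`. Finally a continuous multiplication on the hull agreeing with addition in
`ℤ^d` along the orbit agrees with the transported addition of `Ω` on a dense set.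
-/

open Filter Topology

theorem eq_of_forall_dist_zero_add_eq {G ι : Type*} [MetricSpace G] [AddGroup G]
    [ContinuousAdd G] {t : ι → G} (ht : DenseRange t) {x y : G}
    (h : ∀ i, dist 0 (x + t i) = dist 0 (y + t i)) : x = y := by
  have hext : (fun z => dist 0 (x + z)) = fun z => dist 0 (y + z) :=
    ht.equalizer (by fun_prop) (by fun_prop) (funext h)
  have h0 : dist 0 (y + -x) = 0 := by simpa using (congrFun hext (-x)).symm
  rw [dist_eq_zero, eq_comm, add_neg_eq_zero] at h0
  exact h0.symm

theorem uniformEquicontinuous_add_right {G : Type*} [UniformSpace G] [Add G] [ContinuousAdd G]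
    [CompactSpace G] : UniformEquicontinuous fun (c x : G) => x + c := by
  refine CompactSpace.uniformEquicontinuous_of_equicontinuous fun q U hU => ?_
  obtain ⟨v, hv, hvU⟩ := isCompact_univ.mem_uniformity_of_prod (f := fun x c : G => x + c)
    continuous_add.continuousOn (Set.mem_univ q) (symm_le_uniformity hU)
  rw [nhdsWithin_univ] at hv
  exact Filter.mem_of_superset hv fun p hp c => hvU p hp c (Set.mem_univ c)

theorem UniformContinuous.comp_uniformEquicontinuous {ι α β γ : Type*} [UniformSpace α]
    [UniformSpace β] [UniformSpace γ] {g : α → γ} (hg : UniformContinuous g) {F : ι → β → α}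
    (hF : UniformEquicontinuous F) : UniformEquicontinuous fun i => g ∘ F i :=
  fun _ hU => (hF _ (hg hU)).mono fun _ h i => h i

theorem lp.uniformContinuous_of_uniformEquicontinuous {X ι E : Type*} [PseudoMetricSpace X]
    [NormedAddCommGroup E] {F : X → lp (fun _ : ι => E) ⊤}
    (hF : UniformEquicontinuous fun i x => F x i) : UniformContinuous F := by
  rw [Metric.uniformEquicontinuous_iff] at hF
  rw [Metric.uniformContinuous_iff]
  intro ε hε
  obtain ⟨δ, hδ, hδε⟩ := hF (ε / 2) (half_pos hε)
  refine ⟨δ, hδ, fun {a b} hab => ?_⟩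
  calc dist (F a) (F b) = ‖F a - F b‖ := dist_eq_norm _ _
    _ ≤ ε / 2 := lp.norm_le_of_forall_le (half_pos hε).le fun i => by
        rw [lp.coeFn_sub, Pi.sub_apply, ← dist_eq_norm]; exact (hδε a b hab i).le
    _ < ε := half_lt_self hε

theorem map_add_of_denseRange {G Y ι : Type*} [TopologicalSpace G] [Add G] [ContinuousAdd G]
    [TopologicalSpace Y] [T2Space Y] {ψ : G → Y} (hψ : Continuous ψ) {mul : Y → Y → Y}
    (hmul : Continuous fun q : Y × Y => mul q.1 q.2) {t : ι → G} (ht : DenseRange t)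
    (h : ∀ i j, mul (ψ (t i)) (ψ (t j)) = ψ (t i + t j)) (x y : G) :
    mul (ψ x) (ψ y) = ψ (x + y) :=
  congrFun ((ht.prodMap ht).equalizer (f := Prod.map t t)
    (g := fun p : G × G => mul (ψ p.1) (ψ p.2)) (h := fun p => ψ (p.1 + p.2))
    (by fun_prop) (by fun_prop) (funext fun p => h p.1 p.2)) (x, y)

theorem Sh_mem_hullSet {d : ℕ} (m : Fin d → ℤ) (V : lp (fun _ : Fin d → ℤ => ℝ) ⊤) :
    Sh m V ∈ hullSet V :=
  subset_closure (Set.mem_range_self m)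

section DistanceProfile

variable {d : ℕ} {G : Type*} [MetricSpace G] [AddCommGroup G] {t : (Fin d → ℤ) →+ G}
  {F : G → lp (fun _ : Fin d → ℤ => ℝ) ⊤}

theorem Sh_eq_of_forall_apply_eq_dist (hF : ∀ ω n, F ω n = dist 0 (ω + t n)) (ω : G)
    (m : Fin d → ℤ) : Sh m (F ω) = F (ω - t m) := by
  ext n
  change F ω (n - m) = F (ω - t m) n
  rw [hF, hF, map_sub, add_sub, sub_add_eq_add_sub]

theorem uniformContinuous_of_forall_apply_eq_dist [ContinuousAdd G] [CompactSpace G]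
    (hF : ∀ ω n, F ω n = dist 0 (ω + t n)) : UniformContinuous F := by
  refine lp.uniformContinuous_of_uniformEquicontinuous ?_
  simp_rw [hF]
  exact ((LipschitzWith.dist_right 0).uniformContinuous.comp_uniformEquicontinuous
    uniformEquicontinuous_add_right).comp t

theorem hullSet_eq_range_of_forall_apply_eq_dist [CompactSpace G]
    (hF : ∀ ω n, F ω n = dist 0 (ω + t n)) (ht : DenseRange t) (hinj : Function.Injective F)
    (hcont : Continuous F) : hullSet (F 0) = Set.range F := by
  have horbit : (Set.range fun m => Sh m (F 0)) = F '' Set.range t := by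
    simp_rw [Sh_eq_of_forall_apply_eq_dist hF, zero_sub, ← map_neg, ← Set.range_comp]
    exact neg_surjective.range_comp (F ∘ t)
  rw [hullSet, horbit, (hcont.isClosedEmbedding hinj).closure_image_eq, ht.closure_range,
    Set.image_univ]

end DistanceProfile

theorem hull_isomorphic_to_group_general (d : ℕ) (Ω : Type) [MetricSpace Ω] [AddCommGroup Ω]
    [IsTopologicalAddGroup Ω] [CompactSpace Ω]
    (α : Fin d → Ω)
    (hmin : ∀ ω : Ω, Dense (Set.range fun n : Fin d → ℤ => ω + ∑ j, n j • α j))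
    (F : Ω → lp (fun _ : Fin d → ℤ => ℝ) ⊤)
    (hF : ∀ (ω : Ω) (n : Fin d → ℤ), F ω n = dist (0 : Ω) (ω + ∑ j, n j • α j)) :
    Function.Injective F ∧
    Continuous F ∧
    ∃ ψ : Ω ≃ₜ hullSet (F 0),
      (∀ ω : Ω, ((ψ ω : hullSet (F 0)) : lp (fun _ : Fin d → ℤ => ℝ) ⊤) = F ω) ∧
      -- `ψ` is a group isomorphism for the group structure on the hull (the one for
      -- which `m ↦ S_m F(0)` is a homomorphism)
      ∀ mul : hullSet (F 0) → hullSet (F 0) → hullSet (F 0),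
        Continuous (fun q : hullSet (F 0) × hullSet (F 0) => mul q.1 q.2) →
        (∀ (m k : Fin d → ℤ) (hm : Sh m (F 0) ∈ hullSet (F 0))
          (hk : Sh k (F 0) ∈ hullSet (F 0)) (hmk : Sh (m + k) (F 0) ∈ hullSet (F 0)),
          mul ⟨Sh m (F 0), hm⟩ ⟨Sh k (F 0), hk⟩ = ⟨Sh (m + k) (F 0), hmk⟩) →
        ∀ ω₁ ω₂ : Ω, mul (ψ ω₁) (ψ ω₂) = ψ (ω₁ + ω₂) := by
  set t := (Fintype.linearCombination ℤ α).toAddMonoidHom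
  have hFt : ∀ ω n, F ω n = dist 0 (ω + t n) := hF
  have ht : DenseRange t := by
    have h0 := hmin 0
    simp only [zero_add] at h0
    exact h0
  have hinj : Function.Injective F := fun x y hxy =>
    eq_of_forall_dist_zero_add_eq ht fun n => by rw [← hFt, ← hFt, hxy]
  have hcont : Continuous F := (uniformContinuous_of_forall_apply_eq_dist hFt).continuous
  have hrange := hullSet_eq_range_of_forall_apply_eq_dist hFt ht hinj hcont
  let ψ : Ω ≃ₜ hullSet (F 0) :=
    (hcont.isClosedEmbedding hinj).isEmbedding.toHomeomorph.trans
      (Homeomorph.setCongr hrange.symm)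
  refine ⟨hinj, hcont, ψ, fun _ => rfl, fun mul hmul hmulSh => ?_⟩
  have hψt : ∀ m, ψ (t m) = ⟨Sh (-m) (F 0), Sh_mem_hullSet (-m) (F 0)⟩ := fun m =>
    Subtype.ext <| by
      change F (t m) = Sh (-m) (F 0)
      rw [Sh_eq_of_forall_apply_eq_dist hFt, zero_sub, map_neg, neg_neg]
  refine map_add_of_denseRange ψ.continuous hmul ht fun i j => ?_
  rw [hψt, hψt, ← map_add, hψt]
  exact (hmulSh _ _ _ _ _).trans (Subtype.ext (by rw [neg_add]))

/-- Let `Ω` be a Cantor group with compatible metric `dist` and a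
minimal `ℤ^d` action by translations. With `f(ω) = dist(0, ω)` and
`φ(ω) = (f(T^n ω))_n ∈ ℓ^∞(ℤ^d)`, the map `φ` is injective and continuous, and hence is a
homeomorphism from `Ω` onto `hull(φ(0))`; so `hull(φ(0))` is isomorphic as a topological
group to `Ω`. -/
theorem hull_isomorphic_to_group (d : ℕ) (Ω : Type) [MetricSpace Ω] [AddCommGroup Ω]
    [IsTopologicalAddGroup Ω] [CompactSpace Ω] [TotallyDisconnectedSpace Ω] [Infinite Ω]
    (α : Fin d → Ω)
    (hmin : ∀ ω : Ω, Dense (Set.range fun n : Fin d → ℤ => ω + ∑ j, n j • α j))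
    (F : Ω → lp (fun _ : Fin d → ℤ => ℝ) ⊤)
    (hF : ∀ (ω : Ω) (n : Fin d → ℤ), F ω n = dist (0 : Ω) (ω + ∑ j, n j • α j)) :
    Function.Injective F ∧
    Continuous F ∧
    ∃ ψ : Ω ≃ₜ hullSet (F 0),
      (∀ ω : Ω, ((ψ ω : hullSet (F 0)) : lp (fun _ : Fin d → ℤ => ℝ) ⊤) = F ω) ∧
      -- `ψ` is a group isomorphism for the group structure on the hull (the one for
      -- which `m ↦ S_m F(0)` is a homomorphism)
      ∀ mul : hullSet (F 0) → hullSet (F 0) → hullSet (F 0),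
        Continuous (fun q : hullSet (F 0) × hullSet (F 0) => mul q.1 q.2) →
        (∀ (m k : Fin d → ℤ) (hm : Sh m (F 0) ∈ hullSet (F 0))
          (hk : Sh k (F 0) ∈ hullSet (F 0)) (hmk : Sh (m + k) (F 0) ∈ hullSet (F 0)),
          mul ⟨Sh m (F 0), hm⟩ ⟨Sh k (F 0), hk⟩ = ⟨Sh (m + k) (F 0), hmk⟩) →
        ∀ ω₁ ω₂ : Ω, mul (ψ ω₁) (ψ ω₂) = ψ (ω₁ + ω₂) :=
  hull_isomorphic_to_group_general d Ω α hmin F hF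
end
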